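/- arXiv:1503.05177 — 3 statements merged into one kernel-verified Lean document; each statement's English description precedes it below -/
import Mathlib

section
/- Let M be a matroid on [n] with Orlik-Solomon algebra A(M) = E/I over a field 𝕜, where E is the exterior algebra on generators e₁,…,eₙ and I is generated by ∂(e_C) over circuits C of M, with ∂ the derivation sending each eᵢ to 1. Let Ā(M) be the subalgebra of A(M) generated by V̄ = {v ∈ 𝕜ⁿ : Σᵢ vᵢ = 0}. Then Ā(M) equals the kernel of the induced derivation ∂ on A(M). -/
open ExteriorAlgebra

/-- A circuit of a matroid: a minimal dependent set. -/
def IsCircuit {α : Type*} (M : Matroid α) (C : Set α) : Prop :=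
  M.Dep C ∧ ∀ D ⊂ C, ¬ M.Dep D

/-- The exterior algebra `E = Λ(𝕜^α)`. -/
abbrev Ex (𝕜 : Type) [Field 𝕜] (α : Type) := ExteriorAlgebra 𝕜 (α → 𝕜)

/-- The distinguished degree-one generators `e_i` of the exterior algebra. -/
noncomputable def gen (𝕜 : Type) [Field 𝕜] {α : Type} [DecidableEq α] (i : α) : Ex 𝕜 α :=
  ι 𝕜 (Pi.single i (1 : 𝕜))

/-- The derivation `∂` on the exterior algebra with `∂ e_i = 1` for all `i`
(contraction against the linear functional `v ↦ Σᵢ vᵢ`). -/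
noncomputable def osd (𝕜 : Type) [Field 𝕜] {α : Type} [Fintype α] :
    Ex 𝕜 α →ₗ[𝕜] Ex 𝕜 α :=
  CliffordAlgebra.contractLeft (Q := (0 : QuadraticForm 𝕜 (α → 𝕜)))
    (∑ i, LinearMap.proj i)

/-- The monomial `e_C = ∏_{i ∈ C} e_i`, indices in increasing order. -/
noncomputable def eProd (𝕜 : Type) [Field 𝕜] {α : Type} [DecidableEq α] [LinearOrder α]
    (C : Finset α) : Ex 𝕜 α :=
  ((C.sort (· ≤ ·)).map (gen 𝕜)).prod

/-- The relations `∂ e_C = 0` (for circuits `C`) defining the Orlik-Solomon algebra. -/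
inductive osRel (𝕜 : Type) [Field 𝕜] {α : Type} [Fintype α] [LinearOrder α]
    (M : Matroid α) : Ex 𝕜 α → Ex 𝕜 α → Prop
  | mk (C : Finset α) : IsCircuit M (C : Set α) → osRel 𝕜 M (osd 𝕜 (eProd 𝕜 C)) 0

/-- The Orlik-Solomon algebra `A(M) = E/I(M)`. -/
abbrev OS (𝕜 : Type) [Field 𝕜] {α : Type} [Fintype α] [LinearOrder α] (M : Matroid α) :=
  RingQuot (osRel 𝕜 M)

/-- The quotient map `E → A(M)`. -/
noncomputable def osπ (𝕜 : Type) [Field 𝕜] {α : Type} [Fintype α] [LinearOrder α]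
    (M : Matroid α) : Ex 𝕜 α →ₐ[𝕜] OS 𝕜 M :=
  RingQuot.mkAlgHom 𝕜 (osRel 𝕜 M)

/-- The degree-`p` graded piece `A^p(M)` of the Orlik-Solomon algebra. -/
noncomputable def osPow (𝕜 : Type) [Field 𝕜] {α : Type} [Fintype α] [LinearOrder α]
    (M : Matroid α) (p : ℕ) : Submodule 𝕜 (OS 𝕜 M) :=
  Submodule.map (osπ 𝕜 M).toLinearMap
    ((LinearMap.range (ι 𝕜 : (α → 𝕜) →ₗ[𝕜] Ex 𝕜 α)) ^ p)

/-- The graded piece one lower, `A^{p-1}(M)` (zero when `p = 0`). -/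
noncomputable def osLowPow (𝕜 : Type) [Field 𝕜] {α : Type} [Fintype α] [LinearOrder α]
    (M : Matroid α) : ℕ → Submodule 𝕜 (OS 𝕜 M)
  | 0 => ⊥
  | (q + 1) => osPow 𝕜 M q

/-- The image of `v ∈ 𝕜^α` in `A¹(M)`. -/
noncomputable def osv (𝕜 : Type) [Field 𝕜] {α : Type} [Fintype α] [LinearOrder α]
    (M : Matroid α) (v : α → 𝕜) : OS 𝕜 M :=
  osπ 𝕜 M (ι 𝕜 v)

/-- The `p`-cocycles of the complex `(A(M), ·v)`. -/
noncomputable def osCocycles (𝕜 : Type) [Field 𝕜] {α : Type} [Fintype α] [LinearOrder α]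
    (M : Matroid α) (p : ℕ) (v : α → 𝕜) : Submodule 𝕜 (OS 𝕜 M) :=
  osPow 𝕜 M p ⊓ LinearMap.ker (LinearMap.mulRight 𝕜 (osv 𝕜 M v))

/-- The `p`-coboundaries of the complex `(A(M), ·v)`. -/
noncomputable def osCobound (𝕜 : Type) [Field 𝕜] {α : Type} [Fintype α] [LinearOrder α]
    (M : Matroid α) (p : ℕ) (v : α → 𝕜) : Submodule 𝕜 (OS 𝕜 M) :=
  Submodule.map (LinearMap.mulRight 𝕜 (osv 𝕜 M v)) (osLowPow 𝕜 M p)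

/-- `H^p(A(M), ·v) ≠ 0`, i.e. `v` lies in the resonance variety `ℛ^p(A(M))`. -/
def osResonates (𝕜 : Type) [Field 𝕜] {α : Type} [Fintype α] [LinearOrder α]
    (M : Matroid α) (p : ℕ) (v : α → 𝕜) : Prop :=
  ¬ (osCocycles 𝕜 M p v ≤ osCobound 𝕜 M p v)

/-- `dim_𝕜 H^p(A(M), ·v)`. -/
noncomputable def osCohomDim (𝕜 : Type) [Field 𝕜] {α : Type} [Fintype α] [LinearOrder α]
    (M : Matroid α) (p : ℕ) (v : α → 𝕜) : ℕ :=
  Module.finrank 𝕜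
    (↥(osCocycles 𝕜 M p v) ⧸
      ((osCobound 𝕜 M p v).comap (osCocycles 𝕜 M p v).subtype))

/-- The projective Orlik-Solomon algebra `Ā(M)`: the subalgebra of `A(M)` generated by
(the image of) `V̄ = {v : Σᵢ vᵢ = 0}`. -/
noncomputable def osBar (𝕜 : Type) [Field 𝕜] {α : Type} [Fintype α] [LinearOrder α]
    (M : Matroid α) : Subalgebra 𝕜 (OS 𝕜 M) :=
  Algebra.adjoin 𝕜 ((fun v => osv 𝕜 M v) '' {v | ∑ i, v i = 0})

/-- The degree-`p` graded piece `Ā^p(M)` of the projective Orlik-Solomon algebra. -/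
noncomputable def osBarPow (𝕜 : Type) [Field 𝕜] {α : Type} [Fintype α] [LinearOrder α]
    (M : Matroid α) (p : ℕ) : Submodule 𝕜 (OS 𝕜 M) :=
  osPow 𝕜 M p ⊓ (Subalgebra.toSubmodule (osBar 𝕜 M))

noncomputable def osBarLowPow (𝕜 : Type) [Field 𝕜] {α : Type} [Fintype α] [LinearOrder α]
    (M : Matroid α) : ℕ → Submodule 𝕜 (OS 𝕜 M)
  | 0 => ⊥
  | (q + 1) => osBarPow 𝕜 M q

/-- `H^p(Ā(M), ·v) ≠ 0`, i.e. `v ∈ ℛ^p(Ā(M))` (for `v ∈ V̄`). -/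
def osBarResonates (𝕜 : Type) [Field 𝕜] {α : Type} [Fintype α] [LinearOrder α]
    (M : Matroid α) (p : ℕ) (v : α → 𝕜) : Prop :=
  ¬ ((osBarPow 𝕜 M p ⊓ LinearMap.ker (LinearMap.mulRight 𝕜 (osv 𝕜 M v))) ≤
      Submodule.map (LinearMap.mulRight 𝕜 (osv 𝕜 M v)) (osBarLowPow 𝕜 M p))

/-!
Write `∂` for contraction against `f = ∑ᵢ prᵢ` and `Ē` for the subalgebra of `E` generated by
`ker f`. Since `∂` is a graded derivation vanishing on `ker f`, it kills `Ē`, which gives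
`Ā ⊆ ker ∂_A`. Conversely, fix `e` with `f e = 1`; then `E = Ē + e Ē`. If `a = b + e c` with
`b, c ∈ Ē` and `∂ a = c - e ∂c` vanishes in `A`, then `e c = e e ∂c = 0` in `A`, so `a` and
`b ∈ Ē` have the same image. When `f = 0` there is no such `e`, but then `Ē = E`.
-/

namespace CliffordAlgebra

variable {R M : Type*} [CommRing R] [AddCommGroup M] [Module R M] {Q : QuadraticForm R M}

theorem contractLeft_mul (d : Module.Dual R M) (a b : CliffordAlgebra Q) :
    contractLeft d (a * b) = contractLeft d a * b + involute a * contractLeft d b := by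
  induction a using CliffordAlgebra.induction generalizing b with
  | algebraMap r =>
    rw [contractLeft_algebraMap_mul, contractLeft_algebraMap, zero_mul, zero_add,
      AlgHom.commutes]
  | ι m =>
    rw [contractLeft_ι_mul, contractLeft_ι, involute_ι, neg_mul, Algebra.smul_def,
      sub_eq_add_neg]
  | mul x y hx hy =>
    rw [mul_assoc, hx, hy, hx, map_mul]
    noncomm_ring
  | add x y hx hy =>
    rw [add_mul, map_add, hx, hy, map_add, map_add, add_mul, add_mul]
    abel

end CliffordAlgebra

namespace ExteriorAlgebra

open CliffordAlgebra

section CommRing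

variable {R M : Type*} [CommRing R] [AddCommGroup M] [Module R M]

theorem ι_mul_eq_involute_mul (m : M) (x : ExteriorAlgebra R M) :
    ι R m * x = involute x * ι R m := by
  induction x using CliffordAlgebra.induction with
  | algebraMap r => rw [AlgHom.commutes, Algebra.commutes]
  | ι m' =>
    rw [involute_ι, neg_mul]
    exact eq_neg_of_add_eq_zero_left (ι_add_mul_swap m m')
  | mul x y hx hy => rw [← mul_assoc, hx, mul_assoc, hy, map_mul, mul_assoc]
  | add x y hx hy => rw [mul_add, hx, hy, map_add, add_mul]

variable (f : Module.Dual R M)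

def adjoinKer : Subalgebra R (ExteriorAlgebra R M) :=
  Algebra.adjoin R (ι R '' LinearMap.ker f)

variable {f}

theorem involute_mem_adjoinKer {a : ExteriorAlgebra R M} (ha : a ∈ adjoinKer f) :
    involute a ∈ adjoinKer f := by
  induction ha using Algebra.adjoin_induction with
  | mem x hx =>
    obtain ⟨v, hv, rfl⟩ := hx
    rw [involute_ι]
    exact neg_mem (Algebra.subset_adjoin ⟨v, hv, rfl⟩)
  | algebraMap r => rw [AlgHom.commutes]; exact algebraMap_mem _ r
  | add x y _ _ hx hy => rw [map_add]; exact add_mem hx hy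
  | mul x y _ _ hx hy => rw [map_mul]; exact mul_mem hx hy

theorem contractLeft_eq_zero_of_mem_adjoinKer {a : ExteriorAlgebra R M} (ha : a ∈ adjoinKer f) :
    contractLeft f a = 0 := by
  induction ha using Algebra.adjoin_induction with
  | mem x hx =>
    obtain ⟨v, hv, rfl⟩ := hx
    rw [contractLeft_ι, LinearMap.mem_ker.mp hv, map_zero]
  | algebraMap r => exact contractLeft_algebraMap _ _ r
  | add x y _ _ hx hy => rw [map_add, hx, hy, add_zero]
  | mul x y _ _ hx hy => rw [contractLeft_mul, hx, hy, zero_mul, mul_zero, add_zero]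

theorem exists_eq_add_ι_mul {e : M} (he : f e = 1) (a : ExteriorAlgebra R M) :
    ∃ b ∈ adjoinKer f, ∃ c ∈ adjoinKer f, a = b + ι R e * c := by
  induction a using CliffordAlgebra.induction with
  | algebraMap r =>
    exact ⟨algebraMap R _ r, algebraMap_mem _ r, 0, zero_mem _, by rw [mul_zero, add_zero]⟩
  | ι m =>
    refine ⟨ι R (m - f m • e), Algebra.subset_adjoin ⟨_, ?_, rfl⟩,
      algebraMap R _ (f m), algebraMap_mem _ _, ?_⟩
    · simp [he]
    · rw [← Algebra.commutes, ← Algebra.smul_def, ← map_smul, ← map_add, sub_add_cancel]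
  | mul x y hx hy =>
    obtain ⟨b, hb, c, hc, rfl⟩ := hx
    obtain ⟨b', hb', c', hc', rfl⟩ := hy
    refine ⟨b * b', mul_mem hb hb', c * b' + involute b * c',
      add_mem (mul_mem hc hb') (mul_mem (involute_mem_adjoinKer hb) hc'), ?_⟩
    have hbe : b * ι R e = ι R e * involute b := by
      rw [ι_mul_eq_involute_mul, involute_involute]
    have hce : ι R e * c * (ι R e * c') = 0 := by
      rw [mul_assoc, ← mul_assoc c, ← involute_involute c, ← ι_mul_eq_involute_mul,
        ← mul_assoc, ← mul_assoc, ι_sq_zero, zero_mul, zero_mul]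
    rw [add_mul, mul_add, mul_add, hce, add_zero, ← mul_assoc b, hbe, mul_add, mul_assoc,
      mul_assoc]
    abel
  | add x y hx hy =>
    obtain ⟨b, hb, c, hc, rfl⟩ := hx
    obtain ⟨b', hb', c', hc', rfl⟩ := hy
    exact ⟨b + b', add_mem hb hb', c + c', add_mem hc hc', by rw [mul_add]; abel⟩

theorem mem_map_adjoinKer_of_contractLeft {A : Type*} [Ring A] [Algebra R A]
    (π : ExteriorAlgebra R M →ₐ[R] A) {e : M} (he : f e = 1) {a : ExteriorAlgebra R M}
    (ha : π (contractLeft f a) = 0) : π a ∈ (adjoinKer f).map π := by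
  obtain ⟨b, hb, c, hc, rfl⟩ := exists_eq_add_ι_mul he a
  have hc_eq : π c = π (ι R e * contractLeft f c) := by
    rwa [map_add, contractLeft_eq_zero_of_mem_adjoinKer hb, zero_add, contractLeft_mul,
      contractLeft_ι, he, map_one, one_mul, involute_ι, neg_mul, ← sub_eq_add_neg, map_sub,
      sub_eq_zero] at ha
  have hec : π (ι R e * c) = 0 := by
    rw [map_mul, hc_eq, ← map_mul, ← mul_assoc, ι_sq_zero, zero_mul, map_zero]
  exact ⟨b, hb, by rw [map_add, hec, add_zero]; rfl⟩

end CommRing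

theorem ker_eq_map_adjoinKer {K V A : Type*} [Field K] [AddCommGroup V] [Module K V] [Ring A]
    [Algebra K A] (f : Module.Dual K V) (π : ExteriorAlgebra K V →ₐ[K] A)
    (hπ : Function.Surjective π) (D : A →ₗ[K] A)
    (hD : ∀ x, D (π x) = π (contractLeft f x)) :
    LinearMap.ker D = Subalgebra.toSubmodule ((adjoinKer f).map π) := by
  ext x
  obtain ⟨a, rfl⟩ := hπ x
  rw [Subalgebra.mem_toSubmodule]
  constructor
  · intro ha
    rw [LinearMap.mem_ker, hD] at ha
    rcases f.surjective_or_eq_zero with hf | rfl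
    · obtain ⟨e, he⟩ := hf 1
      exact mem_map_adjoinKer_of_contractLeft π he ha
    · refine ⟨a, ?_, rfl⟩
      rw [adjoinKer, LinearMap.ker_zero, Submodule.top_coe, Set.image_univ, adjoin_range_ι]
      trivial
  · rintro ⟨b, hb, hba⟩
    change π b = π a at hba
    rw [LinearMap.mem_ker, ← hba, hD, contractLeft_eq_zero_of_mem_adjoinKer hb, map_zero]

end ExteriorAlgebra

theorem osBar_eq_ker_deriv_general (𝕜 : Type) [Field 𝕜] {n : ℕ} (M : Matroid (Fin n))
    (D : OS 𝕜 M →ₗ[𝕜] OS 𝕜 M)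
    (hD : ∀ x : Ex 𝕜 (Fin n), D (osπ 𝕜 M x) = osπ 𝕜 M (osd 𝕜 x)) :
    Subalgebra.toSubmodule (osBar 𝕜 M) = LinearMap.ker D := by
  have hBar : osBar 𝕜 M = (adjoinKer (∑ i, LinearMap.proj i : Module.Dual 𝕜 (Fin n → 𝕜))).map
      (osπ 𝕜 M) := by
    rw [adjoinKer, AlgHom.map_adjoin, Set.image_image, osBar]
    congr 2
    ext v
    simp
  rw [ker_eq_map_adjoinKer _ (osπ 𝕜 M) (RingQuot.mkAlgHom_surjective 𝕜 _) D hD, hBar]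

/-- The projective Orlik-Solomon algebra `Ā(M)` equals the kernel of the derivation
`∂_A` induced on `A(M)` by `∂`. -/
theorem osBar_eq_ker_deriv (𝕜 : Type) [Field 𝕜] {n : ℕ} (M : Matroid (Fin n))
    (hE : M.E = Set.univ)
    (D : OS 𝕜 M →ₗ[𝕜] OS 𝕜 M)
    (hD : ∀ x : Ex 𝕜 (Fin n), D (osπ 𝕜 M x) = osπ 𝕜 M (osd 𝕜 x)) :
    Subalgebra.toSubmodule (osBar 𝕜 M) = LinearMap.ker D :=
  osBar_eq_ker_deriv_general 𝕜 M D hD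
end

section
/- Let f : M₁ → M₂ be a complete weak map of matroids. Then the induced algebra homomorphism Λ(f) on exterior algebras maps the Orlik-Solomon ideal I(M₁) into I(M₂), hence induces a well-defined homomorphism of graded 𝕜-algebras A(M₁) → A(M₂). -/
open ExteriorAlgebra

/-- A weak map `M₁ → M₂`, encoded as a function `S₁ → S₂ ∪ {0}` (with the adjoined
loop `0` represented by `none`; the requirement `f 0 = 0` is built in). -/
def IsWeakMap {α β : Type*} (M₁ : Matroid α) (M₂ : Matroid β) (f : α → Option β) : Prop :=
  (∀ i ∈ M₁.E, ∀ b, f i = some b → b ∈ M₂.E) ∧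
  ∀ I : Set α, I ⊆ M₁.E → Set.InjOn f I → (∀ i ∈ I, f i ≠ none) →
    M₂.Indep {b | ∃ i ∈ I, f i = some b} → M₁.Indep I

/-- A weak map is complete if no circuit of `M₁` meets `f⁻¹(0)` in exactly one element. -/
def IsCompleteWM {α β : Type*} (M₁ : Matroid α) (f : α → Option β) : Prop :=
  ∀ C : Set α, IsCircuit M₁ C → {i ∈ C | f i = none}.ncard ≠ 1

/-- A weak map is non-degenerate if `f⁻¹(0) = {0}`. -/
def IsNondegWM {α β : Type*} (f : α → Option β) : Prop := ∀ a, f a ≠ none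

open scoped Classical in
/-- The linear map `𝕜^{S₁} → 𝕜^{S₂}` induced by a weak map, sending `e_i` to
`e_{f(i)}` when `f i ≠ 0` and to `0` when `f i = 0`. -/
noncomputable def wmLin (𝕜 : Type) [Field 𝕜] {α β : Type} [Fintype α]
    (f : α → Option β) : (α → 𝕜) →ₗ[𝕜] (β → 𝕜) where
  toFun v b := ∑ i ∈ Finset.univ.filter (fun i => f i = some b), v i
  map_add' x y := by funext b; simp [Finset.sum_add_distrib]
  map_smul' c x := by funext b; simp [Finset.mul_sum]

/-- The Orlik-Solomon ideal `I(M)`: the two-sided ideal of the exterior algebra generated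
by the elements `∂ e_C`, for circuits `C` of `M`. -/
noncomputable def osIdeal (𝕜 : Type) [Field 𝕜] {α : Type} [Fintype α] [LinearOrder α]
    (M : Matroid α) : TwoSidedIdeal (Ex 𝕜 α) :=
  TwoSidedIdeal.span {x | ∃ C : Finset α, IsCircuit M (C : Set α) ∧ x = osd 𝕜 (eProd 𝕜 C)}


/-!
It suffices to check that `Λ(f)` sends each generator `∂ e_C` of `I(M₁)` into `I(M₂)`.
By completeness, the circuit `C` meets `f⁻¹(0)` in no element or in at least two. In the
second case every term of `∂ e_C` contains a generator killed by `Λ(f)`. In the first case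
`Λ(f)` commutes with `∂` on `e_C` (because `∂ e_{f(i)} = 1 = ∂ e_i`), and `Λ(f) e_C` is `0`
unless `f` is injective on `C`; then `f(C)` is dependent in `M₂` by the weak-map axiom, so it
contains a circuit `C'`, and `∂(e_{C'} e_R) = ∂e_{C'} e_R ± e_{C'} ∂e_R` lies in `I(M₂)`.
-/

section ExteriorProducts

variable (𝕜 : Type) [Field 𝕜] {α : Type} [DecidableEq α]

noncomputable def genProd (l : List α) : Ex 𝕜 α :=
  (l.map (gen 𝕜)).prod

@[simp] lemma genProd_nil : genProd 𝕜 ([] : List α) = 1 := rfl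

@[simp] lemma genProd_cons (a : α) (l : List α) :
    genProd 𝕜 (a :: l) = gen 𝕜 a * genProd 𝕜 l := by
  simp [genProd]

lemma genProd_append (l₁ l₂ : List α) : genProd 𝕜 (l₁ ++ l₂) = genProd 𝕜 l₁ * genProd 𝕜 l₂ := by
  simp [genProd]

lemma gen_mul_gen_swap (i j : α) : gen 𝕜 i * gen 𝕜 j = -(gen 𝕜 j * gen 𝕜 i) :=
  eq_neg_of_add_eq_zero_left (ι_add_mul_swap _ _)

lemma gen_mul_self (i : α) : gen 𝕜 i * gen 𝕜 i = 0 := ι_sq_zero _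

lemma genProd_perm {l l' : List α} (h : l.Perm l') :
    ∃ s : 𝕜, genProd 𝕜 l = s • genProd 𝕜 l' := by
  induction h with
  | nil => exact ⟨1, one_smul _ _ |>.symm⟩
  | cons a _ ih =>
    obtain ⟨s, hs⟩ := ih
    exact ⟨s, by rw [genProd_cons, genProd_cons, hs, mul_smul_comm]⟩
  | swap a b l =>
    refine ⟨-1, ?_⟩
    simp only [genProd_cons, ← mul_assoc, gen_mul_gen_swap 𝕜 b a, neg_mul, neg_smul, one_smul]
  | trans _ _ ih₁ ih₂ =>
    obtain ⟨s, hs⟩ := ih₁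
    obtain ⟨t, ht⟩ := ih₂
    exact ⟨s * t, by rw [hs, ht, smul_smul]⟩

lemma gen_mul_genProd_of_mem {i : α} {l : List α} (h : i ∈ l) : gen 𝕜 i * genProd 𝕜 l = 0 := by
  induction l with
  | nil => simp at h
  | cons a t ih =>
    rw [genProd_cons, ← mul_assoc]
    rcases List.mem_cons.1 h with rfl | h
    · rw [gen_mul_self, zero_mul]
    · rw [gen_mul_gen_swap 𝕜 i a, neg_mul, mul_assoc, ih h, mul_zero, neg_zero]

lemma genProd_eq_zero_of_not_nodup {l : List α} (h : ¬ l.Nodup) : genProd 𝕜 l = 0 := by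
  induction l with
  | nil => exact absurd List.nodup_nil h
  | cons a t ih =>
    rw [genProd_cons]
    by_cases ha : a ∈ t
    · exact gen_mul_genProd_of_mem 𝕜 ha
    · rw [ih (fun ht => h (List.nodup_cons.2 ⟨ha, ht⟩)), mul_zero]

end ExteriorProducts

lemma eProd_eq_genProd (𝕜 : Type) [Field 𝕜] {α : Type} [LinearOrder α] (C : Finset α) :
    eProd 𝕜 C = genProd 𝕜 (C.sort (· ≤ ·)) := rfl

section Derivation

variable (𝕜 : Type) [Field 𝕜] {α : Type} [Fintype α]

lemma osd_one : osd 𝕜 (1 : Ex 𝕜 α) = 0 :=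
  CliffordAlgebra.contractLeft_one _ _

variable [DecidableEq α]

lemma osd_gen_mul (a : α) (x : Ex 𝕜 α) : osd 𝕜 (gen 𝕜 a * x) = x - gen 𝕜 a * osd 𝕜 x := by
  have h := CliffordAlgebra.contractLeft_ι_mul (Q := (0 : QuadraticForm 𝕜 (α → 𝕜)))
    (d := ∑ i, LinearMap.proj i) (Pi.single a (1 : 𝕜)) x
  rwa [show (∑ i, LinearMap.proj (R := 𝕜) (φ := fun _ : α => 𝕜) i) (Pi.single a 1) = 1 by simp,
    one_smul] at h

lemma osd_genProd_mul (l : List α) (y : Ex 𝕜 α) :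
    osd 𝕜 (genProd 𝕜 l * y) =
      osd 𝕜 (genProd 𝕜 l) * y + (-1 : 𝕜) ^ l.length • (genProd 𝕜 l * osd 𝕜 y) := by
  induction l with
  | nil => simp [osd_one]
  | cons a t ih =>
    rw [genProd_cons, mul_assoc, osd_gen_mul, osd_gen_mul, ih, List.length_cons, mul_add,
      mul_smul_comm, sub_mul, pow_succ]
    simp only [mul_assoc, mul_neg_one, neg_smul]
    abel

end Derivation

lemma isCircuit_iff_isCircuit {α : Type*} {M : Matroid α} {C : Set α} :
    IsCircuit M C ↔ M.IsCircuit C := by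
  rw [Matroid.isCircuit_iff_forall_ssubset]
  refine and_congr_right fun hC => forall₂_congr fun D hD => ?_
  rw [Matroid.not_dep_iff (hD.subset.trans hC.subset_ground)]

lemma TwoSidedIdeal.smul_mem_of_mem {𝕜 A : Type*} [CommSemiring 𝕜] [Ring A] [Algebra 𝕜 A]
    (I : TwoSidedIdeal A) (s : 𝕜) {x : A} (hx : x ∈ I) : s • x ∈ I := by
  rw [Algebra.smul_def]
  exact I.mul_mem_left _ _ hx

section OrlikSolomonIdeal

variable (𝕜 : Type) [Field 𝕜] {α : Type} [Fintype α] [LinearOrder α] (M : Matroid α)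

lemma osd_eProd_mem_osIdeal {C : Finset α} (hC : IsCircuit M C) :
    osd 𝕜 (eProd 𝕜 C) ∈ osIdeal 𝕜 M :=
  TwoSidedIdeal.subset_span ⟨C, hC, rfl⟩

/-- For `j ∈ C`, `e_j e_C = 0`, so the derivation rule gives `e_C = e_j ∂ e_C`. -/
lemma eProd_mem_osIdeal {C : Finset α} (hC : IsCircuit M C) : eProd 𝕜 C ∈ osIdeal 𝕜 M := by
  obtain ⟨j, hj⟩ := hC.1.nonempty
  have h := osd_gen_mul 𝕜 j (eProd 𝕜 C)
  rw [eProd_eq_genProd, gen_mul_genProd_of_mem 𝕜 ((Finset.mem_sort _).2 hj), map_zero, eq_comm,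
    sub_eq_zero, ← eProd_eq_genProd] at h
  rw [h]
  exact (osIdeal 𝕜 M).mul_mem_left _ _ (osd_eProd_mem_osIdeal 𝕜 M hC)

lemma osd_genProd_mem_osIdeal {l : List α} (hl : l.Nodup) {C : Finset α} (hC : IsCircuit M C)
    (hCl : ∀ b ∈ C, b ∈ l) : osd 𝕜 (genProd 𝕜 l) ∈ osIdeal 𝕜 M := by
  have hperm : l.Perm (C.sort (· ≤ ·) ++ l.filter (· ∉ C)) := by
    refine List.perm_of_nodup_nodup_toFinset_eq hl
      ((C.sort_nodup _).append (hl.filter _) fun b hbC hbl => ?_) ?_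
    · simp_all
    · ext b
      simp only [List.mem_toFinset, List.mem_append, List.mem_filter, Finset.mem_sort,
        decide_eq_true_eq]
      constructor
      · tauto
      · rintro (h | h)
        exacts [hCl b h, h.1]
  obtain ⟨s, hs⟩ := genProd_perm 𝕜 hperm
  rw [hs, map_smul, genProd_append, osd_genProd_mul, ← eProd_eq_genProd]
  refine TwoSidedIdeal.smul_mem_of_mem _ _ ((osIdeal 𝕜 M).add_mem ?_ ?_)
  · exact (osIdeal 𝕜 M).mul_mem_right _ _ (osd_eProd_mem_osIdeal 𝕜 M hC)
  · exact TwoSidedIdeal.smul_mem_of_mem _ _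
      ((osIdeal 𝕜 M).mul_mem_right _ _ (eProd_mem_osIdeal 𝕜 M hC))

lemma osIdeal_le_ker_osπ : osIdeal 𝕜 M ≤ TwoSidedIdeal.ker (osπ 𝕜 M) := by
  refine TwoSidedIdeal.span_le.2 ?_
  rintro _ ⟨C, hC, rfl⟩
  rw [SetLike.mem_coe, TwoSidedIdeal.mem_ker, osπ, RingQuot.mkAlgHom_rel 𝕜 (osRel.mk C hC),
    map_zero]

end OrlikSolomonIdeal

lemma List.eq_of_nodup_filterMap {α β : Type*} {f : α → Option β} {l : List α}
    (h : (l.filterMap f).Nodup) {x y : α} (hx : x ∈ l) (hy : y ∈ l) {b : β} (hxb : f x = some b)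
    (hyb : f y = some b) : x = y := by
  induction l with
  | nil => simp at hx
  | cons a t ih =>
    rcases hfa : f a with _ | c
    · rw [List.filterMap_cons_none hfa] at h
      rcases List.mem_cons.1 hx with rfl | hx
      · simp_all
      rcases List.mem_cons.1 hy with rfl | hy
      · simp_all
      exact ih h hx hy
    · rw [List.filterMap_cons_some hfa, List.nodup_cons] at h
      rcases List.mem_cons.1 hx with rfl | hx <;> rcases List.mem_cons.1 hy with rfl | hy
      · rfl
      · exact absurd (List.mem_filterMap.2 ⟨y, hy, hyb⟩) (by simp_all)
      · exact absurd (List.mem_filterMap.2 ⟨x, hx, hxb⟩) (by simp_all)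
      · exact ih h.2 hx hy

lemma IsWeakMap.dep_image {α β : Type*} {M₁ : Matroid α} {M₂ : Matroid β} {f : α → Option β}
    (hf : IsWeakMap M₁ M₂ f) {D : Set α} (hD : M₁.Dep D) (hinj : D.InjOn f)
    (hD₀ : ∀ i ∈ D, f i ≠ none) : M₂.Dep {b | ∃ i ∈ D, f i = some b} :=
  ⟨fun hind => hD.not_indep (hf.2 D hD.subset_ground hinj hD₀ hind),
    fun _ ⟨i, hi, hb⟩ => hf.1 i (hD.subset_ground hi) _ hb⟩

section InducedMap

variable (𝕜 : Type) [Field 𝕜] {α β : Type} [Fintype α] [DecidableEq α] {f : α → Option β}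

lemma wmLin_single_of_eq_none {i : α} (h : f i = none) : wmLin 𝕜 f (Pi.single i 1) = 0 := by
  ext b'
  simp [wmLin, Pi.single_apply, h]

lemma map_gen_of_eq_none {i : α} (h : f i = none) :
    ExteriorAlgebra.map (wmLin 𝕜 f) (gen 𝕜 i) = 0 := by
  rw [gen, map_apply_ι, wmLin_single_of_eq_none 𝕜 h, map_zero]

variable [DecidableEq β]

lemma wmLin_single_of_eq_some {i : α} {b : β} (h : f i = some b) :
    wmLin 𝕜 f (Pi.single i 1) = Pi.single b 1 := by
  ext b'
  simp [wmLin, Pi.single_apply, h, eq_comm]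

lemma map_gen_of_eq_some {i : α} {b : β} (h : f i = some b) :
    ExteriorAlgebra.map (wmLin 𝕜 f) (gen 𝕜 i) = gen 𝕜 b := by
  rw [gen, map_apply_ι, wmLin_single_of_eq_some 𝕜 h, gen]

lemma map_genProd_of_forall_ne_none {l : List α} (h : ∀ i ∈ l, f i ≠ none) :
    ExteriorAlgebra.map (wmLin 𝕜 f) (genProd 𝕜 l) = genProd 𝕜 (l.filterMap f) := by
  induction l with
  | nil => simp
  | cons a t ih =>
    obtain ⟨b, hb⟩ := Option.ne_none_iff_exists'.1 (h a List.mem_cons_self)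
    rw [genProd_cons, map_mul, map_gen_of_eq_some 𝕜 hb, List.filterMap_cons_some hb, genProd_cons,
      ih fun i hi => h i (List.mem_cons_of_mem a hi)]

lemma map_osd_genProd_of_forall_ne_none [Fintype β] {l : List α} (h : ∀ i ∈ l, f i ≠ none) :
    ExteriorAlgebra.map (wmLin 𝕜 f) (osd 𝕜 (genProd 𝕜 l)) =
      osd 𝕜 (ExteriorAlgebra.map (wmLin 𝕜 f) (genProd 𝕜 l)) := by
  induction l with
  | nil => simp [osd_one]
  | cons a t ih =>
    obtain ⟨b, hb⟩ := Option.ne_none_iff_exists'.1 (h a List.mem_cons_self)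
    rw [genProd_cons, osd_gen_mul, map_sub, map_mul, map_mul, map_gen_of_eq_some 𝕜 hb,
      ih fun i hi => h i (List.mem_cons_of_mem a hi), osd_gen_mul]

end InducedMap

section CircuitImage

variable (𝕜 : Type) [Field 𝕜] {α β : Type} [Fintype α] [LinearOrder α] {f : α → Option β}

lemma map_osd_eProd_eq_zero {C : Finset α} {i j : α} (hi : i ∈ C) (hj : j ∈ C) (hij : i ≠ j)
    (hfi : f i = none) (hfj : f j = none) :
    ExteriorAlgebra.map (wmLin 𝕜 f) (osd 𝕜 (eProd 𝕜 C)) = 0 := by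
  set l := C.sort (· ≤ ·)
  have hil : i ∈ l := (Finset.mem_sort _).2 hi
  have hjl : j ∈ l.erase i := (List.mem_erase_of_ne hij.symm).2 ((Finset.mem_sort _).2 hj)
  obtain ⟨s, hs⟩ := genProd_perm 𝕜
    ((List.perm_cons_erase hil).trans ((List.perm_cons_erase hjl).cons i))
  rw [eProd_eq_genProd, hs, map_smul, genProd_cons, genProd_cons, osd_gen_mul, osd_gen_mul]
  simp [map_gen_of_eq_none 𝕜 hfi, map_gen_of_eq_none 𝕜 hfj]

variable [Fintype β] [LinearOrder β] {M₁ : Matroid α} {M₂ : Matroid β}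

lemma map_osd_eProd_mem_osIdeal_of_forall_ne_none (hf : IsWeakMap M₁ M₂ f) {C : Finset α}
    (hC : IsCircuit M₁ C) (hC₀ : ∀ i ∈ C, f i ≠ none) :
    ExteriorAlgebra.map (wmLin 𝕜 f) (osd 𝕜 (eProd 𝕜 C)) ∈ osIdeal 𝕜 M₂ := by
  classical
  set l := C.sort (· ≤ ·)
  have hl₀ : ∀ i ∈ l, f i ≠ none := fun i hi => hC₀ i ((Finset.mem_sort _).1 hi)
  rw [eProd_eq_genProd, map_osd_genProd_of_forall_ne_none 𝕜 hl₀,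
    map_genProd_of_forall_ne_none 𝕜 hl₀]
  by_cases hnd : (l.filterMap f).Nodup
  · have hinj : (C : Set α).InjOn f := fun x hx y hy hxy => by
      obtain ⟨b, hb⟩ := Option.ne_none_iff_exists'.1 (hC₀ x hx)
      exact List.eq_of_nodup_filterMap hnd ((Finset.mem_sort _).2 hx) ((Finset.mem_sort _).2 hy)
        hb (hxy ▸ hb)
    have himage : {b | ∃ i ∈ (C : Set α), f i = some b} = {b | b ∈ l.filterMap f} := by
      ext b
      simp [l, List.mem_filterMap]
    obtain ⟨C', hC'l, hC'⟩ :=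
      (himage ▸ hf.dep_image hC.1 hinj hC₀).exists_isCircuit_subset
    refine osd_genProd_mem_osIdeal 𝕜 M₂ hnd (C := C'.toFinset) ?_ fun b hb => ?_
    · rwa [Set.coe_toFinset, isCircuit_iff_isCircuit]
    · exact hC'l (Set.mem_toFinset.1 hb)
  · rw [genProd_eq_zero_of_not_nodup 𝕜 hnd, map_zero]
    exact (osIdeal 𝕜 M₂).zero_mem

lemma map_osd_eProd_mem_osIdeal (hf : IsWeakMap M₁ M₂ f) (hfc : IsCompleteWM M₁ f)
    {C : Finset α} (hC : IsCircuit M₁ C) :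
    ExteriorAlgebra.map (wmLin 𝕜 f) (osd 𝕜 (eProd 𝕜 C)) ∈ osIdeal 𝕜 M₂ := by
  classical
  have hcard : (C.filter (f · = none)).card ≠ 1 := by
    simpa [← Set.ncard_coe_finset] using hfc C hC
  rcases Nat.lt_or_ge 1 (C.filter (f · = none)).card with h | h
  · obtain ⟨i, hi, j, hj, hij⟩ := Finset.one_lt_card.1 h
    rw [Finset.mem_filter] at hi hj
    rw [map_osd_eProd_eq_zero 𝕜 hi.1 hj.1 hij hi.2 hj.2]
    exact (osIdeal 𝕜 M₂).zero_mem
  · refine map_osd_eProd_mem_osIdeal_of_forall_ne_none 𝕜 hf hC fun i hi hfi => ?_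
    have hempty : (C.filter (f · = none)).card = 0 := by omega
    exact Finset.filter_eq_empty_iff.1 (Finset.card_eq_zero.1 hempty) hi hfi

end CircuitImage

theorem completeWM_inducesOSHom_general (𝕜 : Type) [Field 𝕜] {α β : Type}
    [Fintype α] [LinearOrder α] [Fintype β] [LinearOrder β]
    (M₁ : Matroid α) (M₂ : Matroid β)
    (f : α → Option β) (hf : IsWeakMap M₁ M₂ f) (hfc : IsCompleteWM M₁ f) :
    (∀ x ∈ osIdeal 𝕜 M₁, ExteriorAlgebra.map (wmLin 𝕜 f) x ∈ osIdeal 𝕜 M₂) ∧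
    ∃ g : OS 𝕜 M₁ →ₐ[𝕜] OS 𝕜 M₂,
      ∀ x : Ex 𝕜 α, g (osπ 𝕜 M₁ x) = osπ 𝕜 M₂ (ExteriorAlgebra.map (wmLin 𝕜 f) x) := by
  have hI : osIdeal 𝕜 M₁ ≤ (osIdeal 𝕜 M₂).comap (ExteriorAlgebra.map (wmLin 𝕜 f)) := by
    refine TwoSidedIdeal.span_le.2 ?_
    rintro _ ⟨C, hC, rfl⟩
    exact (TwoSidedIdeal.mem_comap _).2 (map_osd_eProd_mem_osIdeal 𝕜 hf hfc hC)
  have hrel : ∀ ⦃x y : Ex 𝕜 α⦄, osRel 𝕜 M₁ x y →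
      (osπ 𝕜 M₂).comp (ExteriorAlgebra.map (wmLin 𝕜 f)) x =
        (osπ 𝕜 M₂).comp (ExteriorAlgebra.map (wmLin 𝕜 f)) y := by
    rintro _ _ ⟨C, hC⟩
    rw [map_zero]
    exact (TwoSidedIdeal.mem_ker (osπ 𝕜 M₂)).1
      (osIdeal_le_ker_osπ 𝕜 M₂ (map_osd_eProd_mem_osIdeal 𝕜 hf hfc hC))
  exact ⟨fun x hx => (TwoSidedIdeal.mem_comap _).1 (hI hx),
    RingQuot.liftAlgHom 𝕜 ⟨_, hrel⟩, RingQuot.liftAlgHom_mkAlgHom_apply 𝕜 _ hrel⟩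

/-- If `f : M₁ → M₂` is a complete weak map of matroids, then the induced algebra
homomorphism `Λ(f)` on exterior algebras maps the Orlik-Solomon ideal `I(M₁)` into
`I(M₂)`, hence induces a well-defined homomorphism of graded `𝕜`-algebras
`A(M₁) → A(M₂)`. -/
theorem completeWM_inducesOSHom (𝕜 : Type) [Field 𝕜] {α β : Type}
    [Fintype α] [LinearOrder α] [Fintype β] [LinearOrder β]
    (M₁ : Matroid α) (M₂ : Matroid β) (hE₁ : M₁.E = Set.univ) (hE₂ : M₂.E = Set.univ)
    (f : α → Option β) (hf : IsWeakMap M₁ M₂ f) (hfc : IsCompleteWM M₁ f) :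
    (∀ x ∈ osIdeal 𝕜 M₁, ExteriorAlgebra.map (wmLin 𝕜 f) x ∈ osIdeal 𝕜 M₂) ∧
    ∃ g : OS 𝕜 M₁ →ₐ[𝕜] OS 𝕜 M₂,
      ∀ x : Ex 𝕜 α, g (osπ 𝕜 M₁ x) = osπ 𝕜 M₂ (ExteriorAlgebra.map (wmLin 𝕜 f) x) :=
  completeWM_inducesOSHom_general 𝕜 M₁ M₂ f hf hfc
end

section
/- If f : M₁ → M₂ is an epimorphism of matroids in the category with complete weak maps as morphisms, then the induced homomorphism A(f) : A(M₁) → A(M₂) of Orlik-Solomon algebras is surjective. -/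
open ExteriorAlgebra

/-- Composition of maps `S₁ → S₂ ∪ {0}`, `S₂ → S₃ ∪ {0}` (sending `0 ↦ 0`). -/
def owComp {α β γ : Type*} (f : α → Option β) (g : β → Option γ) : α → Option γ :=
  fun a => (f a).bind g

/-- `f` is an epimorphism in the category `𝕄` of matroids with complete weak maps as
morphisms. -/
def IsEpiWM {α β : Type*} (M₁ : Matroid α) (M₂ : Matroid β) (f : α → Option β) : Prop :=
  ∀ {γ : Type} (M₃ : Matroid γ) (g h : β → Option γ),
    IsWeakMap M₂ M₃ g → IsCompleteWM M₂ g →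
    IsWeakMap M₂ M₃ h → IsCompleteWM M₂ h →
    owComp f g = owComp f h → ∀ b ∈ M₂.E, g b = h b

/-!
Testing an epimorphism `f` against two nondegenerate maps into a rank-zero matroid that differ
only at a point `b` outside the image of `f` shows that `f` is onto `S₂`. Hence the induced
linear map `𝕜^{S₁} → 𝕜^{S₂}` is onto, so is the induced map of exterior algebras followed by
`E(S₂) → A(M₂)`, and this composite is `g` precomposed with `E(S₁) → A(M₁)`.
-/

section WeakMaps

variable {α β : Type*}

theorem isWeakMap_loopyOn_univ (M : Matroid α) (u : α → Option β) :
    IsWeakMap M (Matroid.loopyOn Set.univ) u := by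
  refine ⟨fun _ _ _ _ => Set.mem_univ _, fun I _ _ hI hind => ?_⟩
  obtain rfl : I = ∅ := by
    rw [Matroid.loopyOn_indep_iff, Set.eq_empty_iff_forall_notMem] at hind
    refine Set.eq_empty_of_forall_notMem fun i hi => ?_
    obtain ⟨c, hc⟩ := Option.ne_none_iff_exists'.mp (hI i hi)
    exact hind c ⟨i, hi, hc⟩
  exact M.empty_indep

theorem IsNondegWM.isCompleteWM {u : α → Option β} (hu : IsNondegWM u) (M : Matroid α) :
    IsCompleteWM M u := by
  intro C _
  rw [show {i ∈ C | u i = none} = ∅ from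
    Set.eq_empty_of_forall_notMem fun i hi => hu i hi.2, Set.ncard_empty]
  exact zero_ne_one

theorem IsEpiWM.exists_eq_some {M₁ : Matroid α} {M₂ : Matroid β} {f : α → Option β}
    (hepi : IsEpiWM M₁ M₂ f) {b : β} (hb : b ∈ M₂.E) : ∃ a, f a = some b := by
  classical
  by_contra! hfb
  let u₁ : β → Option Bool := fun _ => some true
  let u₂ : β → Option Bool := fun x => some (decide (x ≠ b))
  have hcomp : owComp f u₁ = owComp f u₂ := by
    funext a
    cases hfa : f a with
    | none => simp [owComp, hfa]
    | some c => simp [owComp, hfa, u₁, u₂, show c ≠ b by rintro rfl; exact hfb a hfa]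
  have hu₁ : IsNondegWM u₁ := fun _ => Option.some_ne_none _
  have hu₂ : IsNondegWM u₂ := fun _ => Option.some_ne_none _
  simpa [u₁, u₂] using hepi (Matroid.loopyOn Set.univ) u₁ u₂
    (isWeakMap_loopyOn_univ M₂ u₁) (hu₁.isCompleteWM M₂)
    (isWeakMap_loopyOn_univ M₂ u₂) (hu₂.isCompleteWM M₂) hcomp b hb

end WeakMaps

section WmLin

variable (𝕜 : Type) [Field 𝕜] {α β : Type} [Fintype α] [DecidableEq α] [DecidableEq β]
  {f : α → Option β}

theorem wmLin_single {a : α} {b : β} (hab : f a = some b) (c : 𝕜) :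
    wmLin 𝕜 f (Pi.single a c) = Pi.single b c := by
  funext b'
  simp only [wmLin, LinearMap.coe_mk, AddHom.coe_mk, Pi.single_apply]
  by_cases hb : b' = b
  · subst hb
    simp [hab]
  · simp only [hb, if_false]
    refine Finset.sum_eq_zero fun i hi => if_neg fun hia => hb ?_
    simp only [Finset.mem_filter, hia, hab, Option.some.injEq] at hi
    exact hi.2.symm

theorem wmLin_surjective [Fintype β] (hf : ∀ b, ∃ a, f a = some b) :
    Function.Surjective (wmLin 𝕜 f) := by
  choose s hs using hf
  intro v
  refine ⟨∑ b, Pi.single (s b) (v b), ?_⟩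
  simp only [map_sum, wmLin_single 𝕜 (hs _), Finset.univ_sum_single]

end WmLin

theorem epiWM_OSHom_surjective_general (𝕜 : Type) [Field 𝕜] {α β : Type}
    [Fintype α] [LinearOrder α] [Fintype β] [LinearOrder β]
    (M₁ : Matroid α) (M₂ : Matroid β) (hE₂ : M₂.E = Set.univ)
    (f : α → Option β) (hepi : IsEpiWM M₁ M₂ f)
    (g : OS 𝕜 M₁ →ₐ[𝕜] OS 𝕜 M₂)
    (hg : ∀ x : Ex 𝕜 α, g (osπ 𝕜 M₁ x) = osπ 𝕜 M₂ (ExteriorAlgebra.map (wmLin 𝕜 f) x)) :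
    Function.Surjective ⇑g := by
  have hlin : Function.Surjective (wmLin 𝕜 f) :=
    wmLin_surjective 𝕜 fun b => hepi.exists_eq_some (hE₂ ▸ Set.mem_univ b)
  have hcomp : Function.Surjective (g ∘ osπ 𝕜 M₁) := by
    rw [show ⇑g ∘ osπ 𝕜 M₁ = osπ 𝕜 M₂ ∘ ExteriorAlgebra.map (wmLin 𝕜 f) from funext hg]
    exact (RingQuot.mkAlgHom_surjective 𝕜 _).comp (ExteriorAlgebra.map_surjective_iff.mpr hlin)
  exact hcomp.of_comp

/-- If `f : M₁ → M₂` is an epimorphism of matroids in the category with complete weak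
maps as morphisms, then the induced homomorphism `A(f) : A(M₁) → A(M₂)` of
Orlik-Solomon algebras is surjective. -/
theorem epiWM_OSHom_surjective (𝕜 : Type) [Field 𝕜] {α β : Type}
    [Fintype α] [LinearOrder α] [Fintype β] [LinearOrder β]
    (M₁ : Matroid α) (M₂ : Matroid β) (hE₁ : M₁.E = Set.univ) (hE₂ : M₂.E = Set.univ)
    (f : α → Option β) (hf : IsWeakMap M₁ M₂ f) (hfc : IsCompleteWM M₁ f)
    (hepi : IsEpiWM M₁ M₂ f)
    (g : OS 𝕜 M₁ →ₐ[𝕜] OS 𝕜 M₂)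
    (hg : ∀ x : Ex 𝕜 α, g (osπ 𝕜 M₁ x) = osπ 𝕜 M₂ (ExteriorAlgebra.map (wmLin 𝕜 f) x)) :
    Function.Surjective ⇑g :=
  epiWM_OSHom_surjective_general 𝕜 M₁ M₂ hE₂ f hepi g hg
end
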